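/- arXiv:2202.06644 — 3 statements merged into one kernel-verified Lean document; each statement's English description precedes it below -/
import Mathlib

section
/- A network N on X (with |X| ≥ 2) is forest-based if and only if it is based on the trivial forest on X, i.e., the phylogenetic forest whose components are the single-vertex trees {x} for x ∈ X. Equivalently, N is forest-based if and only if N contains a collection of |X| vertex-disjoint directed paths (some possibly of length 0), one ending at each leaf, that together span all vertices of N, such that no arc of N joins two non-consecutive vertices of the same path. -/
open Classical

noncomputable def outdeg {V : Type*} (A : V → V → Prop) (v : V) : ℕ := {u | A v u}.ncard
noncomputable def indeg {V : Type*} (A : V → V → Prop) (v : V) : ℕ := {u | A u v}.ncard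

def Acyclic {V : Type*} (A : V → V → Prop) : Prop := ∀ v : V, ¬ Relation.TransGen A v v

def undirConn {V : Type*} (A : V → V → Prop) : Prop :=
  ∀ u v : V, Relation.ReflTransGen (fun a b => A a b ∨ A b a) u v

/-- A (multiply rooted) network with leaf set `X`: a semi-binary, connected DAG in which
the leaves (vertices of outdegree 0) are exactly `X` and every root has outdegree ≥ 2. -/
structure IsNetwork {V : Type*} (A : V → V → Prop) (X : Set V) : Prop where
  acyclic : Acyclic A
  conn : undirConn A
  leaves : ∀ v, outdeg A v = 0 ↔ v ∈ X
  roots2 : ∀ v, indeg A v = 0 → 2 ≤ outdeg A v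
  semibinary : ∀ v, 2 ≤ indeg A v → indeg A v = 2 ∧ outdeg A v = 1

/-- A (rooted) forest: every vertex has indegree at most one, and there are no directed cycles. -/
def IsForest {V : Type*} (F : V → V → Prop) : Prop := (∀ v, indeg F v ≤ 1) ∧ Acyclic F

/-- Two vertices lie in the same tree (connected component) of the forest `F`. -/
def sameTree {V : Type*} (F : V → V → Prop) (u v : V) : Prop :=
  Relation.ReflTransGen (fun a b => F a b ∨ F b a) u v

/-- `F` is a subdivision forest for the network `(V,A)` with leaf set `X`: a spanning
subforest with the same leaf set, all non-forest arcs joining distinct trees of `F`. -/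
def SubdivForest {V : Type*} (A F : V → V → Prop) (X : Set V) : Prop :=
  (∀ u v, F u v → A u v) ∧ IsForest F ∧
    (∀ v, outdeg F v = 0 ↔ v ∈ X) ∧
    (∀ u v, A u v → ¬ F u v → ¬ sameTree F u v)

/-- A network is forest-based if it admits a subdivision forest. -/
def ForestBased {V : Type*} (A : V → V → Prop) (X : Set V) : Prop :=
  ∃ F : V → V → Prop, SubdivForest A F X

/-!
Keeping only one outgoing arc at every vertex of a subdivision forest turns it into a
disjoint union of directed paths, one ending at each leaf. The thinned forest has
the same leaves, and a network arc inside one of its paths is either a kept arc or a discarded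
forest arc; the latter would close a cycle in the original forest or duplicate an indegree.
-/

section

variable {V : Type*}

lemma outdeg_eq_zero_iff [Finite V] {F : V → V → Prop} {v : V} :
    outdeg F v = 0 ↔ ∀ w, ¬ F v w := by
  simp [outdeg, Set.ncard_eq_zero (Set.toFinite _), Set.eq_empty_iff_forall_notMem]

lemma outdeg_le_one_iff [Finite V] {F : V → V → Prop} {v : V} :
    outdeg F v ≤ 1 ↔ ∀ a b, F v a → F v b → a = b :=
  Set.ncard_le_one_iff (Set.toFinite _)

lemma indeg_le_one_iff [Finite V] {F : V → V → Prop} {v : V} :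
    indeg F v ≤ 1 ↔ ∀ a b, F a v → F b v → a = b :=
  Set.ncard_le_one_iff (Set.toFinite _)

lemma indeg_mono [Finite V] {F G : V → V → Prop} (hGF : ∀ u v, G u v → F u v) (v : V) :
    indeg G v ≤ indeg F v :=
  Set.ncard_le_ncard (fun u => hGF u v) (Set.toFinite _)

lemma sameTree_mono {F G : V → V → Prop} (hGF : ∀ u v, G u v → F u v) {u v : V}
    (h : sameTree G u v) : sameTree F u v :=
  Relation.ReflTransGen.mono (fun a b => Or.imp (hGF a b) (hGF b a)) _ _ h

/-- In a disjoint union of directed paths, two vertices of the same component are comparable. -/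
lemma reflTransGen_or_of_sameTree {G : V → V → Prop}
    (hout : ∀ u a b, G u a → G u b → a = b) (hin : ∀ a b v, G a v → G b v → a = b)
    {u v : V} (h : sameTree G u v) :
    Relation.ReflTransGen G u v ∨ Relation.ReflTransGen G v u := by
  induction h with
  | refl => exact Or.inl .refl
  | @tail b c _ hbc ih =>
    rcases hbc with hbc | hcb
    · rcases ih with hub | hbu
      · exact Or.inl (hub.tail hbc)
      · rcases hbu.cases_head with rfl | ⟨d, hbd, hdu⟩
        · exact Or.inl (.single hbc)
        · exact Or.inr (hout b d c hbd hbc ▸ hdu)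
    · rcases ih with hub | hbu
      · rcases hub.cases_tail with rfl | ⟨d, hud, hdb⟩
        · exact Or.inr (.single hcb)
        · exact Or.inl (hin d c b hdb hcb ▸ hud)
      · exact Or.inr (hbu.head hcb)

def pathSubforest (F : V → V → Prop) (u v : V) : Prop :=
  ∃ h : ∃ w, F u w, v = h.choose

lemma pathSubforest_le {F : V → V → Prop} {u v : V} (h : pathSubforest F u v) : F u v := by
  obtain ⟨h, rfl⟩ := h
  exact h.choose_spec

lemma pathSubforest_functional {F : V → V → Prop} {u a b : V}
    (ha : pathSubforest F u a) (hb : pathSubforest F u b) : a = b := by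
  obtain ⟨_, rfl⟩ := ha
  obtain ⟨_, rfl⟩ := hb
  rfl

lemma exists_pathSubforest {F : V → V → Prop} {u w : V} (h : F u w) :
    ∃ v, pathSubforest F u v :=
  ⟨_, ⟨⟨w, h⟩, rfl⟩⟩

lemma outdeg_pathSubforest_le_one [Finite V] (F : V → V → Prop) (v : V) :
    outdeg (pathSubforest F) v ≤ 1 :=
  outdeg_le_one_iff.2 fun _ _ => pathSubforest_functional

lemma outdeg_pathSubforest_eq_zero_iff [Finite V] {F : V → V → Prop} {v : V} :
    outdeg (pathSubforest F) v = 0 ↔ outdeg F v = 0 := by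
  simp only [outdeg_eq_zero_iff]
  refine ⟨fun h w hw => ?_, fun h w hw => h w (pathSubforest_le hw)⟩
  obtain ⟨v', hv'⟩ := exists_pathSubforest hw
  exact h v' hv'

lemma IsForest.pathSubforest [Finite V] {F : V → V → Prop} (hF : IsForest F) :
    IsForest (pathSubforest F) :=
  ⟨fun v => (indeg_mono (fun _ _ => pathSubforest_le) v).trans (hF.1 v),
    fun v hv => hF.2 v (Relation.TransGen.mono (fun _ _ => pathSubforest_le) _ _ hv)⟩

lemma SubdivForest.pathSubforest [Finite V] {A F : V → V → Prop} {X : Set V}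
    (hF : SubdivForest A F X) : SubdivForest A (pathSubforest F) X := by
  obtain ⟨hFA, hForest, hleaf, hcross⟩ := hF
  have hin : ∀ a b v, F a v → F b v → a = b :=
    fun a b v => indeg_le_one_iff.1 (hForest.1 v) a b
  refine ⟨fun u v h => hFA u v (pathSubforest_le h), hForest.pathSubforest,
    fun v => outdeg_pathSubforest_eq_zero_iff.trans (hleaf v), ?_⟩
  intro u v hA hnot hsame
  by_cases hF : F u v
  · -- `u → v` is a discarded forest arc: it either closes a cycle or gives `v` two parents.
    have hcomp := reflTransGen_or_of_sameTree (G := _root_.pathSubforest F)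
      (fun _ _ _ ha hb => pathSubforest_functional ha hb)
      (fun a b v ha hb => hin a b v (pathSubforest_le ha) (pathSubforest_le hb)) hsame
    rcases hcomp with huv | hvu
    · rcases huv.cases_tail with rfl | ⟨d, _, hdv⟩
      · exact hForest.2 _ (.single hF)
      · exact hnot (hin d u v (pathSubforest_le hdv) hF ▸ hdv)
    · exact hForest.2 u
        (.head' hF (Relation.ReflTransGen.mono (fun _ _ => pathSubforest_le) _ _ hvu))
  · exact hcross u v hA hF (sameTree_mono (fun _ _ => pathSubforest_le) hsame)

end

theorem stmt2_general {V : Type*} [Fintype V] (A : V → V → Prop) (X : Set V) :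
    ForestBased A X ↔
      ∃ F : V → V → Prop, SubdivForest A F X ∧ ∀ v, outdeg F v ≤ 1 :=
  ⟨fun ⟨F, hF⟩ => ⟨pathSubforest F, hF.pathSubforest, outdeg_pathSubforest_le_one F⟩,
    fun ⟨F, hF, _⟩ => ⟨F, hF⟩⟩

/-- a network is forest-based iff it is based on the trivial forest, i.e.
iff it admits a subdivision forest which is a disjoint union of directed paths
(every vertex of outdegree ≤ 1 in the forest), one ending at each leaf, spanning all
vertices, with no arc of `N` joining two non-consecutive vertices of the same path. -/
theorem stmt2 {V : Type*} [Fintype V] (A : V → V → Prop) (X : Set V)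
    (hnet : IsNetwork A X) (hX : 2 ≤ X.ncard) :
    ForestBased A X ↔
      ∃ F : V → V → Prop, SubdivForest A F X ∧ ∀ v, outdeg F v ≤ 1 :=
  stmt2_general A X
end

section
/- Let N be a binary phylogenetic network on X with |X| ≥ 2 (i.e., N has a single root). If N is forest-based, then N is tree-based. -/
open Classical

/-- Binary: hybrid vertices have indegree 2 and outdegree 1; roots and non-leaf tree
vertices have outdegree 2. -/
def IsBinary {V : Type*} (A : V → V → Prop) : Prop :=
  ∀ v, (2 ≤ indeg A v → indeg A v = 2 ∧ outdeg A v = 1) ∧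
    (indeg A v = 0 → outdeg A v = 2) ∧
    (indeg A v = 1 → outdeg A v = 0 ∨ outdeg A v = 2)

/-- Tree-based: there is a spanning subtree with the same leaf set. -/
def TreeBased {V : Type*} (A : V → V → Prop) (X : Set V) : Prop :=
  ∃ T : V → V → Prop, (∀ u v, T u v → A u v) ∧ IsForest T ∧ undirConn T ∧
    (∀ v, outdeg T v = 0 ↔ v ∈ X)

/-!
Let `ρ` be the root of `N` and `F` a forest inside `N` with leaf set `X`. Every tree of `F` other
than the one containing `ρ` has a root `r ≠ ρ`, which therefore has a parent `p r` in `N`.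
Adding the arcs `p r → r` keeps indegrees at most one and stays inside `N`, hence acyclic, and
it does not change the leaves, which are `X` both for `F` and for `N`. The result is connected:
walking up from any vertex to the root of its tree and then across the new arc strictly climbs
in the DAG `N`, so by well-founded induction every vertex reaches `ρ`.
-/

open Relation

section Digraph

variable {V : Type*} {A B : V → V → Prop}

theorem indeg_eq_zero_iff [Finite V] {v : V} : indeg A v = 0 ↔ ∀ u, ¬ A u v := by
  rw [indeg, Set.ncard_eq_zero]
  simp [Set.eq_empty_iff_forall_notMem]

theorem outdeg_mono [Finite V] (h : A ≤ B) (v : V) : outdeg A v ≤ outdeg B v :=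
  Set.ncard_le_ncard fun u => h v u

theorem outdeg_eq_zero_iff_of_le_of_le [Finite V] {F T : V → V → Prop} {X : Set V}
    (hFT : F ≤ T) (hTA : T ≤ A) (hF : ∀ v, outdeg F v = 0 ↔ v ∈ X)
    (hA : ∀ v, outdeg A v = 0 ↔ v ∈ X) (v : V) : outdeg T v = 0 ↔ v ∈ X := by
  have hFT := outdeg_mono hFT v
  have hTA := outdeg_mono hTA v
  constructor
  · exact fun h => (hF v).mp (by omega)
  · exact fun h => by have := (hA v).mpr h; omega

theorem Acyclic.mono (h : A ≤ B) (hB : Acyclic B) : Acyclic A :=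
  fun v hv => hB v (TransGen.mono h _ _ hv)

theorem Acyclic.wellFounded_transGen [Finite V] (hA : Acyclic A) :
    WellFounded (TransGen A) :=
  haveI : IsTrans V (TransGen A) := ⟨fun _ _ _ => TransGen.trans⟩
  haveI : Std.Irrefl (TransGen A) := ⟨hA⟩
  Finite.wellFounded_of_trans_of_irrefl _

theorem Acyclic.exists_indeg_eq_zero_reflTransGen [Finite V] (hA : Acyclic A) (v : V) :
    ∃ r, indeg A r = 0 ∧ ReflTransGen A r v := by
  induction v using hA.wellFounded_transGen.induction with
  | _ v ih =>
    by_cases hv : indeg A v = 0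
    · exact ⟨v, hv, .refl⟩
    · obtain ⟨u, hu⟩ : ∃ u, A u v := by simpa [indeg_eq_zero_iff] using hv
      obtain ⟨r, hr, hru⟩ := ih u (.single hu)
      exact ⟨r, hr, hru.tail hu⟩

theorem exists_parent_of_ncard_roots_eq_one [Finite V]
    (hroot : {v | indeg A v = 0}.ncard = 1) : ∃ ρ, ∃ p : V → V, ∀ v, v ≠ ρ → A (p v) v := by
  obtain ⟨ρ, hρ⟩ := Set.ncard_eq_one.mp hroot
  have hparent (v : V) : ∃ u, v ≠ ρ → A u v := by
    by_cases hv : v = ρ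
    · exact ⟨v, absurd hv⟩
    · by_contra! h
      exact hv (hρ.subset (indeg_eq_zero_iff.mpr fun u => (h u).2))
  choose p hp using hparent
  exact ⟨ρ, p, hp⟩

end Digraph

section AttachRoots

variable {V : Type*} {A F : V → V → Prop} {ρ : V} {p : V → V}

def attachRoots (F : V → V → Prop) (ρ : V) (p : V → V) (u v : V) : Prop :=
  F u v ∨ (indeg F v = 0 ∧ v ≠ ρ ∧ u = p v)

theorem le_attachRoots : F ≤ attachRoots F ρ p := fun _ _ => Or.inl

theorem attachRoots_le (hFA : F ≤ A) (hp : ∀ v, v ≠ ρ → A (p v) v) : attachRoots F ρ p ≤ A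
  | u, v, .inl h => hFA u v h
  | _, v, .inr ⟨_, hv, rfl⟩ => hp v hv

theorem indeg_attachRoots_le_one [Finite V] (hF : ∀ v, indeg F v ≤ 1) (v : V) :
    indeg (attachRoots F ρ p) v ≤ 1 := by
  by_cases hv : indeg F v = 0 ∧ v ≠ ρ
  · have hsingle : {u | attachRoots F ρ p u v} = {p v} := by
      ext u
      simp [attachRoots, hv, indeg_eq_zero_iff.mp hv.1 u]
    simp [indeg, hsingle]
  · have hsame : {u | attachRoots F ρ p u v} = {u | F u v} := by
      ext u
      simp only [attachRoots, Set.mem_ofPred_eq, or_iff_left_iff_imp]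
      exact fun h => absurd ⟨h.1, h.2.1⟩ hv
    simpa [indeg, hsame] using hF v

theorem reflTransGen_attachRoots_root [Finite V] (hA : Acyclic A) (hFA : F ≤ A)
    (hp : ∀ v, v ≠ ρ → A (p v) v) (v : V) :
    ReflTransGen (SymmGen (attachRoots F ρ p)) v ρ := by
  induction v using hA.wellFounded_transGen.induction with
  | _ v ih =>
    obtain ⟨r, hr, hrv⟩ := (hA.mono hFA).exists_indeg_eq_zero_reflTransGen v
    have hvr : ReflTransGen (SymmGen (attachRoots F ρ p)) v r :=
      symm (ReflTransGen.mono (fun u v h => SymmGen.of_rel (le_attachRoots u v h)) _ _ hrv)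
    by_cases hrρ : r = ρ
    · exact hrρ ▸ hvr
    have hpv : TransGen A (p r) v := TransGen.head' (hp r hrρ) (ReflTransGen.mono hFA _ _ hrv)
    have hrp : SymmGen (attachRoots F ρ p) r (p r) := .of_rel_symm (Or.inr ⟨hr, hrρ, rfl⟩)
    exact (hvr.tail hrp).trans (ih (p r) hpv)

theorem isForest_attachRoots [Finite V] (hA : Acyclic A) (hFA : F ≤ A)
    (hp : ∀ v, v ≠ ρ → A (p v) v) (hF : ∀ v, indeg F v ≤ 1) : IsForest (attachRoots F ρ p) :=
  ⟨indeg_attachRoots_le_one hF, hA.mono (attachRoots_le hFA hp)⟩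

theorem undirConn_attachRoots [Finite V] (hA : Acyclic A) (hFA : F ≤ A)
    (hp : ∀ v, v ≠ ρ → A (p v) v) : undirConn (attachRoots F ρ p) := fun u v =>
  (reflTransGen_attachRoots_root hA hFA hp u).trans
    (symm (reflTransGen_attachRoots_root hA hFA hp v))

end AttachRoots

theorem stmt3_general {V : Type*} [Fintype V] (A : V → V → Prop) (X : Set V)
    (hnet : IsNetwork A X)
    (hroot : {v | indeg A v = 0}.ncard = 1)
    (hfb : ForestBased A X) : TreeBased A X := by
  obtain ⟨F, hFA, ⟨hFind, -⟩, hFleaf, -⟩ := hfb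
  obtain ⟨ρ, p, hp⟩ := exists_parent_of_ncard_roots_eq_one hroot
  exact ⟨attachRoots F ρ p, attachRoots_le hFA hp,
    isForest_attachRoots hnet.acyclic hFA hp hFind, undirConn_attachRoots hnet.acyclic hFA hp,
    outdeg_eq_zero_iff_of_le_of_le le_attachRoots (attachRoots_le hFA hp) hFleaf hnet.leaves⟩

/-- a binary phylogenetic network (single root) that is forest-based
is tree-based. -/
theorem stmt3 {V : Type*} [Fintype V] (A : V → V → Prop) (X : Set V)
    (hnet : IsNetwork A X) (hbin : IsBinary A)
    (hroot : {v | indeg A v = 0}.ncard = 1) (hX : 2 ≤ X.ncard)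
    (hfb : ForestBased A X) : TreeBased A X :=
  stmt3_general A X hnet hroot hfb
end

section
/- Let N be an m-rooted network (m ≥ 2) that is proper forest-based with proper base forest F. Define Γ_F(N) as the undirected graph on vertex set RH(N) = R(N) ∪ H(N) with edges {u, v} whenever u and v belong to different trees of (the embedding of) F. Then Γ_F(N) is a loop-free omni-extension of Γ(N). -/
open Classical

/-- `g = γ_v`: `g` is the lowest ancestor of `v` lying in `RH(N) = R(N) ∪ H(N)`
(the vertices of indegree ≠ 1), i.e. the directed path from `g` to `v` passes only
through tree vertices (indegree 1) after `g`. -/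
def isGamma {V : Type*} (A : V → V → Prop) (g v : V) : Prop :=
  indeg A g ≠ 1 ∧ Relation.ReflTransGen (fun a b => A a b ∧ indeg A b = 1) g v

/-- The graph `Γ(N)` on `RH(N)`: `u` and `v` are joined if some hybrid vertex has
parents `u'`, `v'` with `γ_{u'} = u` and `γ_{v'} = v`. -/
def GammaN {V : Type*} (A : V → V → Prop) (u v : V) : Prop :=
  ∃ h u' v', 2 ≤ indeg A h ∧ A u' h ∧ A v' h ∧ u' ≠ v' ∧
    isGamma A u u' ∧ isGamma A v v'

/-- An omnian: a non-leaf vertex all of whose children are hybrid vertices. -/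
def Omnian {V : Type*} (A : V → V → Prop) (v : V) : Prop :=
  outdeg A v ≠ 0 ∧ ∀ c, A v c → 2 ≤ indeg A c

/-- `E` is an omni-extension of `Γ(N)`: a supergraph of `Γ(N)` on the vertex set
`RH(N)` such that every omnian `v` has a child `h` with `{γ_u, h}` an edge of `E`,
where `u` is the other parent of `h`. -/
def OmniExt {V : Type*} (A : V → V → Prop) (E : V → V → Prop) : Prop :=
  Symmetric E ∧ (∀ u v, E u v → indeg A u ≠ 1 ∧ indeg A v ≠ 1) ∧
    (∀ u v, GammaN A u v → E u v) ∧
    ∀ v, Omnian A v → ∃ h u g, A v h ∧ 2 ≤ indeg A h ∧ A u h ∧ u ≠ v ∧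
      isGamma A g u ∧ E g h

/-- Proper forest-based: forest-based with a base forest having exactly as many
component trees (roots of the subdivision forest) as `N` has roots. -/
def ProperFB {V : Type*} (A : V → V → Prop) (X : Set V) : Prop :=
  ∃ F : V → V → Prop, SubdivForest A F X ∧
    {v | indeg F v = 0}.ncard = {v | indeg A v = 0}.ncard

/-!
Every root of `N` is a root of `F`, and both have `m` roots, so the roots coincide and every
non-root vertex has exactly one `F`-parent. Consequently the unique in-arc of a tree vertex is
a forest arc, so `γ_v` lies in the tree of `v`. A hybrid vertex has one forest in-arc, and its
other in-arc joins two trees, so its two parents lie in different trees; this gives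
`Γ(N) ⊆ Γ_F(N)`. An omnian is not a leaf of `F`, so it is the forest parent of a hybrid child
`h`, and then the other parent `u` of `h`, together with `γ_u`, lies outside the tree of `h`.
-/

section

variable {V : Type*} {A F : V → V → Prop} {X : Set V}

lemma sameTree_symm {u v : V} (h : sameTree F u v) : sameTree F v u :=
  Relation.ReflTransGen.mono (fun _ _ => Or.symm) _ _ (Relation.ReflTransGen.swap _ _ h)

lemma indeg_le_indeg_of_le [Finite V] (hFA : ∀ u v, F u v → A u v) (v : V) :
    indeg F v ≤ indeg A v :=
  Set.ncard_le_ncard fun u => hFA u v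

lemma eq_of_indeg_le_one [Finite V] {a b v : V} (hv : indeg A v ≤ 1) (ha : A a v) (hb : A b v) :
    a = b :=
  (Set.ncard_le_one_iff).mp hv ha hb

lemma eq_or_eq_of_indeg_eq_two [Finite V] {a b c v : V} (hv : indeg A v = 2) (ha : A a v)
    (hb : A b v) (hc : A c v) (hab : a ≠ b) : c = a ∨ c = b := by
  by_contra! hne
  have : 2 < indeg A v := (Set.two_lt_ncard).mpr ⟨a, ha, b, hb, c, hc, hab, hne.1.symm, hne.2.symm⟩
  omega

lemma exists_parent_of_indeg_ne_zero {v : V} (hv : indeg A v ≠ 0) : ∃ u, A u v :=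
  Set.nonempty_of_ncard_ne_zero hv

lemma exists_isGamma [Finite V] (hA : Acyclic A) (v : V) : ∃ g, isGamma A g v := by
  have : Std.Irrefl (Relation.TransGen A) := ⟨hA⟩
  have hwf : WellFounded A :=
    Subrelation.wf Relation.TransGen.single (Finite.wellFounded_of_trans_of_irrefl _)
  induction v using hwf.induction with
  | _ v ih =>
    by_cases hv : indeg A v = 1
    · obtain ⟨p, hp⟩ := exists_parent_of_indeg_ne_zero (hv ▸ one_ne_zero)
      obtain ⟨g, hg, hgp⟩ := ih p hp
      exact ⟨g, hg, hgp.tail ⟨hp, hv⟩⟩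
    · exact ⟨v, hv, .refl⟩

lemma exists_forest_parent_of_roots_eq (hroots : {v | indeg F v = 0} = {v | indeg A v = 0})
    {v : V} (hv : indeg A v ≠ 0) : ∃ w, F w v :=
  exists_parent_of_indeg_ne_zero fun h => hv (hroots ▸ h : v ∈ {v | indeg A v = 0})

namespace SubdivForest

lemma exists_forest_child (hF : SubdivForest A F X) {v : V} (hv : v ∉ X) : ∃ h, F v h :=
  Set.nonempty_of_ncard_ne_zero fun h0 => hv ((hF.2.2.1 v).mp h0)

variable [Finite V]

lemma setOf_indeg_eq_zero_eq (hF : SubdivForest A F X)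
    (hcard : {v | indeg F v = 0}.ncard = {v | indeg A v = 0}.ncard) :
    {v | indeg F v = 0} = {v | indeg A v = 0} :=
  (Set.eq_of_subset_of_ncard_le
    (fun v (hv : indeg A v = 0) => Nat.eq_zero_of_le_zero (hv ▸ indeg_le_indeg_of_le hF.1 v))
    hcard.le).symm

lemma forest_arc_of_indeg_eq_one (hF : SubdivForest A F X)
    (hroots : {v | indeg F v = 0} = {v | indeg A v = 0}) {a v : V} (hav : A a v)
    (hv : indeg A v = 1) : F a v := by
  obtain ⟨w, hwv⟩ := exists_forest_parent_of_roots_eq hroots (hv ▸ one_ne_zero)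
  rwa [eq_of_indeg_le_one hv.le (hF.1 w v hwv) hav] at hwv

lemma sameTree_of_isGamma (hF : SubdivForest A F X)
    (hroots : {v | indeg F v = 0} = {v | indeg A v = 0}) {g v : V} (hg : isGamma A g v) :
    sameTree F g v := by
  obtain ⟨-, hpath⟩ := hg
  induction hpath with
  | refl => exact .refl
  | tail _ hbc ih => exact ih.tail (Or.inl (hF.forest_arc_of_indeg_eq_one hroots hbc.1 hbc.2))

lemma not_sameTree_of_ne_forest_parent (hF : SubdivForest A F X) {u w v : V} (huv : A u v)
    (hwv : F w v) (huw : u ≠ w) : ¬ sameTree F u v :=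
  hF.2.2.2 u v huv fun hFuv => huw (eq_of_indeg_le_one (hF.2.1.1 v) hFuv hwv)

lemma not_sameTree_of_parents (hF : SubdivForest A F X)
    (hroots : {v | indeg F v = 0} = {v | indeg A v = 0}) {u u' h : V} (hh : indeg A h = 2)
    (hu : A u h) (hu' : A u' h) (huu' : u ≠ u') : ¬ sameTree F u u' := by
  obtain ⟨w, hwh⟩ := exists_forest_parent_of_roots_eq hroots (hh ▸ two_ne_zero)
  have hw : sameTree F w h := .single (Or.inl hwh)
  intro hs
  rcases eq_or_eq_of_indeg_eq_two hh hu hu' (hF.1 w h hwh) huu' with rfl | rfl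
  · exact hF.not_sameTree_of_ne_forest_parent hu' hwh huu'.symm ((sameTree_symm hs).trans hw)
  · exact hF.not_sameTree_of_ne_forest_parent hu hwh huu' (hs.trans hw)

end SubdivForest

end

theorem stmt12_general {V : Type*} [Fintype V] (A : V → V → Prop) (X : Set V) (m : ℕ)
    (hnet : IsNetwork A X) (hroots : {v | indeg A v = 0}.ncard = m)
    (F : V → V → Prop) (hF : SubdivForest A F X)
    (hproper : {v | indeg F v = 0}.ncard = m) :
    OmniExt A (fun u v => indeg A u ≠ 1 ∧ indeg A v ≠ 1 ∧ ¬ sameTree F u v) ∧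
      ∀ u, ¬ (indeg A u ≠ 1 ∧ indeg A u ≠ 1 ∧ ¬ sameTree F u u) := by
  have hre := hF.setOf_indeg_eq_zero_eq (hproper.trans hroots.symm)
  refine ⟨⟨fun u v huv => ⟨huv.2.1, huv.1, fun hs => huv.2.2 (sameTree_symm hs)⟩,
    fun u v huv => ⟨huv.1, huv.2.1⟩, ?_, ?_⟩, fun u hu => hu.2.2 .refl⟩
  · rintro u v ⟨h, u', v', hh, hu'h, hv'h, hne, hgu, hgv⟩
    refine ⟨hgu.1, hgv.1, fun hs => ?_⟩
    refine hF.not_sameTree_of_parents hre (hnet.semibinary h hh).1 hu'h hv'h hne ?_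
    exact (sameTree_symm (hF.sameTree_of_isGamma hre hgu)).trans
      (hs.trans (hF.sameTree_of_isGamma hre hgv))
  · rintro v ⟨hout, hchild⟩
    obtain ⟨h, hvh⟩ := hF.exists_forest_child fun hvX => hout ((hnet.leaves v).mpr hvX)
    have hh : 2 ≤ indeg A h := hchild h (hF.1 v h hvh)
    obtain ⟨u, huh, huv⟩ := Set.exists_ne_of_one_lt_ncard (s := {u | A u h}) hh v
    obtain ⟨g, hg⟩ := exists_isGamma hnet.acyclic u
    refine ⟨h, u, g, hF.1 v h hvh, hh, huh, huv, hg, hg.1, by omega, fun hgh => ?_⟩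
    exact hF.not_sameTree_of_ne_forest_parent huh hvh huv
      ((sameTree_symm (hF.sameTree_of_isGamma hre hg)).trans hgh)

/-- if `N` is proper forest-based with proper base forest given by the
subdivision forest `F`, then the graph `Γ_F(N)` on `RH(N)` joining vertices lying in
different trees of `F` is a loop-free omni-extension of `Γ(N)`. -/
theorem stmt12 {V : Type*} [Fintype V] (A : V → V → Prop) (X : Set V) (m : ℕ)
    (hm : 2 ≤ m) (hnet : IsNetwork A X) (hroots : {v | indeg A v = 0}.ncard = m)
    (F : V → V → Prop) (hF : SubdivForest A F X)
    (hproper : {v | indeg F v = 0}.ncard = m) :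
    OmniExt A (fun u v => indeg A u ≠ 1 ∧ indeg A v ≠ 1 ∧ ¬ sameTree F u v) ∧
      ∀ u, ¬ (indeg A u ≠ 1 ∧ indeg A u ≠ 1 ∧ ¬ sameTree F u u) :=
  stmt12_general A X m hnet hroots F hF hproper
end
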